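/- For every (η, ξ) ∈ Θ = {(η, ξ) ∈ ℝ² : −π ≤ η ≤ 0 and ξ < −η}, the point g(η, ξ) lies in the open first quadrant Q = {z ∈ ℂ : Re z > 0 and Im z > 0}. -/
import Mathlib


/-- The point `u₀ = (1 + √3 i)/2`. -/
noncomputable def u0 : ℂ := (1 + Real.sqrt 3 * Complex.I) / 2

/-- The map `g(η, ξ) = √3 i (R e^{iξ} − 1)/(1 − R²) + u₀` with `R = e^{−√3(η+ξ)}`. -/
noncomputable def gexp (η ξ : ℝ) : ℂ :=
  (Real.sqrt 3 : ℂ) * Complex.I *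
      (((Real.exp (-(Real.sqrt 3) * (η + ξ)) : ℝ) : ℂ) * Complex.exp (Complex.I * (ξ : ℂ)) - 1)
    / (1 - ((Real.exp (-(Real.sqrt 3) * (η + ξ)) : ℝ) : ℂ) ^ 2) + u0

lemma key (s R c si D : ℝ) (hD : D ≠ 0) :
    (s:ℂ)*Complex.I*((R:ℂ)*((c:ℂ)+(si:ℂ)*Complex.I)-1)/((D:ℂ)) + (1+(s:ℂ)*Complex.I)/2
     = ((-s*R*si/D + 1/2 : ℝ):ℂ) + ((s*(R*c-1)/D + s/2 : ℝ):ℂ)*Complex.I := by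
  have hD' : (D:ℂ) ≠ 0 := Complex.ofReal_ne_zero.mpr hD
  push_cast
  field_simp
  ring_nf
  simp [Complex.I_sq]
  ring

lemma gexp_eq (η ξ : ℝ) (hD : (1 - Real.exp (-(Real.sqrt 3) * (η + ξ)) ^ 2) ≠ 0) :
    gexp η ξ =
      ((-(Real.sqrt 3) * Real.exp (-(Real.sqrt 3) * (η + ξ)) * Real.sin ξ /
          (1 - Real.exp (-(Real.sqrt 3) * (η + ξ)) ^ 2) + 1/2 : ℝ) : ℂ) +
      ((Real.sqrt 3 * (Real.exp (-(Real.sqrt 3) * (η + ξ)) * Real.cos ξ - 1) /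
          (1 - Real.exp (-(Real.sqrt 3) * (η + ξ)) ^ 2) + Real.sqrt 3 / 2 : ℝ) : ℂ) * Complex.I := by
  have h := key (Real.sqrt 3) (Real.exp (-(Real.sqrt 3) * (η + ξ))) (Real.cos ξ) (Real.sin ξ)
      (1 - Real.exp (-(Real.sqrt 3) * (η + ξ)) ^ 2) hD
  unfold gexp u0
  rw [mul_comm Complex.I (ξ:ℂ), Complex.exp_mul_I, ← Complex.ofReal_cos, ← Complex.ofReal_sin]
  rw [show ((1:ℂ) - ((Real.exp (-(Real.sqrt 3) * (η + ξ)) : ℝ) : ℂ) ^ 2)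
      = (((1 - Real.exp (-(Real.sqrt 3) * (η + ξ)) ^ 2 : ℝ)) : ℂ) by push_cast; ring]
  exact h

/-- for `(η, ξ) ∈ Θ = {−π ≤ η ≤ 0, ξ < −η}`, the point `g(η, ξ)` lies in the
open first quadrant. -/
theorem gexp_mem_first_quadrant (η ξ : ℝ) (h1 : -Real.pi ≤ η) (h2 : η ≤ 0) (h3 : ξ < -η) :
    0 < (gexp η ξ).re ∧ 0 < (gexp η ξ).im := by
  have hs3 : Real.sqrt 3 ^ 2 = 3 := Real.sq_sqrt (by norm_num)
  have hspos : 0 < Real.sqrt 3 := Real.sqrt_pos.mpr (by norm_num)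
  set s := Real.sqrt 3 with hs
  set R := Real.exp (-s * (η + ξ)) with hR
  have htpos : 0 < -(η + ξ) := by linarith
  have hR1 : 1 < R := by
    rw [hR]; exact Real.one_lt_exp_iff.mpr (by nlinarith)
  have hRpos : 0 < R := by linarith
  have hD : 1 - R ^ 2 ≠ 0 := by nlinarith
  have hD2 : 0 < 2 * (R ^ 2 - 1) := by nlinarith
  -- key inequality for the real part
  have hkey : 0 < R ^ 2 - 1 + 2 * s * R * Real.sin ξ := by
    rcases le_or_gt 0 (Real.sin ξ) with hsin | hsin
    · nlinarith [mul_nonneg (mul_nonneg hspos.le hRpos.le) hsin]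
    · have hξneg : ξ < 0 := by
        by_contra hc
        push_neg at hc
        have hξπ : ξ ≤ Real.pi := le_of_lt (lt_of_lt_of_le h3 (by linarith))
        have := Real.sin_nonneg_of_nonneg_of_le_pi hc hξπ
        linarith
      have hsb : -Real.sin ξ < -(η + ξ) := by
        have h' := Real.sin_lt (show (0:ℝ) < -ξ by linarith)
        rw [Real.sin_neg] at h'
        linarith
      -- sinh(s ⬝ t) > s ⬝ t  with t = -(η+ξ), R = e^{s t}
      have hst : 0 < s * -(η + ξ) := by positivity
      have hsinh := (Real.self_lt_sinh_iff.mpr hst)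
      rw [Real.sinh_eq] at hsinh
      have hRe : R = Real.exp (s * -(η + ξ)) := by rw [hR]; ring_nf
      have hexp : Real.exp (-(s * -(η + ξ))) = 1 / R := by
        rw [hRe, Real.exp_neg]; field_simp
      rw [hexp] at hsinh
      -- hsinh : s * -(η+ξ) < (R - 1/R)/2
      rw [← hRe] at hsinh
      have h5 : 2 * (s * -(η + ξ)) * R < (R - 1/R) * R := by
        rw [lt_div_iff₀ (by norm_num : (0:ℝ) < 2)] at hsinh
        nlinarith
      have h6 : (R - 1/R) * R = R ^ 2 - 1 := by field_simp
      have h7 : s * (-Real.sin ξ) < s * -(η + ξ) := by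
        exact (mul_lt_mul_iff_right₀ hspos).mpr hsb
      nlinarith
  have hkey2 : 0 < s * (R ^ 2 - 2 * R * Real.cos ξ + 1) := by
    have hc := Real.cos_le_one ξ
    have hq : 0 < R ^ 2 - 2 * R * Real.cos ξ + 1 := by
      nlinarith [sq_nonneg (R - 1), mul_nonneg hRpos.le (show (0:ℝ) ≤ 1 - Real.cos ξ by linarith)]
    exact mul_pos hspos hq
  constructor
  · rw [gexp_eq η ξ hD]
    simp only [Complex.add_re, Complex.ofReal_re, Complex.mul_re, Complex.I_re, mul_zero,
      Complex.ofReal_im, Complex.I_im, mul_one, sub_zero, zero_sub, zero_mul]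
    have e : -s * R * Real.sin ξ / (1 - R ^ 2) + 1 / 2
        = (R ^ 2 - 1 + 2 * s * R * Real.sin ξ) / (2 * (R ^ 2 - 1)) := by
      rw [div_add_div _ _ hD (by nlinarith), div_eq_div_iff (by nlinarith) (by nlinarith)]
      ring
    rw [e]
    simpa using div_pos hkey hD2
  · rw [gexp_eq η ξ hD]
    simp only [Complex.add_im, Complex.ofReal_im, Complex.mul_im, Complex.I_re, mul_zero,
      Complex.ofReal_re, Complex.I_im, mul_one, zero_add, add_zero, zero_mul]
    have e : s * (R * Real.cos ξ - 1) / (1 - R ^ 2) + s / 2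
        = s * (R ^ 2 - 2 * R * Real.cos ξ + 1) / (2 * (R ^ 2 - 1)) := by
      rw [div_add_div _ _ hD (by norm_num), div_eq_div_iff (by nlinarith) (by nlinarith)]
      ring
    rw [e]
    simpa using div_pos hkey2 hD2
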